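/- arXiv:2403.18943 — 2 statements merged into one kernel-verified Lean document; each statement's English description precedes it below -/
import Mathlib

section
/- Let n ≥ 2 be an even integer and c an odd integer with 0 < c < n. For every integer d ≥ 0, the number of vertices of the chordal ring mixed graph CRM(n,c) at distance exactly d from the vertex 0 is at most d+1. -/
/-- The arcs of the chordal ring mixed graph `CRM(n,c)`: `i → i+1`. -/
def crmArc (n : ℕ) (u v : ZMod n) : Prop := v = u + 1

/-- The edges of `CRM(n,c)`: `i ∼ i + c` for odd `i` (stated symmetrically). -/
def crmEdge (n c : ℕ) (u v : ZMod n) : Prop :=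
  (u.val % 2 = 1 ∧ v = u + (c : ZMod n)) ∨ (v.val % 2 = 1 ∧ u = v + (c : ZMod n))

/-- One step in the associated digraph of `CRM(n,c)` (edge or arc). -/
def crmStep (n c : ℕ) (u v : ZMod n) : Prop := crmEdge n c u v ∨ crmArc n u v

/-- `hasWalk step d u v` : there is a directed walk of length `d` from `u` to `v`. -/
def hasWalk {V : Type*} (step : V → V → Prop) : ℕ → V → V → Prop
  | 0, u, v => u = v
  | d + 1, u, v => ∃ w, step u w ∧ hasWalk step d w v

namespace CRMaux

lemma hasWalk_snoc {V : Type*} {step : V → V → Prop} (d : ℕ) :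
    ∀ {u w v : V}, hasWalk step d u w → step w v → hasWalk step (d + 1) u v := by
  induction d with
  | zero => intro u w v h s; exact ⟨v, h ▸ s, rfl⟩
  | succ d ih =>
    rintro u w v ⟨x, sx, hx⟩ s
    exact ⟨x, sx, ih hx s⟩

lemma hasWalk_unsnoc {V : Type*} {step : V → V → Prop} (d : ℕ) :
    ∀ {u v : V}, hasWalk step (d + 1) u v → ∃ w, hasWalk step d u w ∧ step w v := by
  induction d with
  | zero => rintro u v ⟨w, s, h⟩; exact ⟨u, rfl, (show w = v from h) ▸ s⟩
  | succ d ih =>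
    rintro u v ⟨w, s, h⟩
    obtain ⟨x, hx, sx⟩ := ih h
    exact ⟨x, ⟨w, s, hx⟩, sx⟩

variable {n c : ℕ}

lemma val_add_mod_two (hn : n ≠ 0) (h2 : 2 ∣ n) (a b : ZMod n) :
    (a + b).val % 2 = (a.val + b.val) % 2 := by
  haveI : NeZero n := ⟨hn⟩
  rw [ZMod.val_add, Nat.mod_mod_of_dvd _ h2]

lemma val_natCast_mod_two (hn : n ≠ 0) (h2 : 2 ∣ n) (m : ℕ) :
    ((m : ZMod n)).val % 2 = m % 2 := by
  haveI : NeZero n := ⟨hn⟩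
  rw [ZMod.val_natCast, Nat.mod_mod_of_dvd _ h2]

lemma step_arc (u : ZMod n) : crmStep n c u (u + 1) := Or.inr rfl

lemma step_up {u : ZMod n} (h : u.val % 2 = 1) : crmStep n c u (u + c) :=
  Or.inl (Or.inl ⟨h, rfl⟩)

lemma step_down {u : ZMod n} (h : (u - (c : ZMod n)).val % 2 = 1) :
    crmStep n c u (u - c) :=
  Or.inl (Or.inr ⟨h, by ring⟩)

lemma walk_ones (d : ℕ) : ∀ u : ZMod n, hasWalk (crmStep n c) d u (u + d) := by
  induction d with
  | zero => intro u; simp [hasWalk]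
  | succ d ih =>
    intro u
    refine ⟨u + 1, step_arc u, ?_⟩
    have h : u + ((d : ℕ) + 1 : ℕ) = (u + 1) + d := by push_cast; ring
    rw [h]
    exact ih (u + 1)

section walks

variable (hn2 : 2 ≤ n) (h2 : 2 ∣ n) (hcm : c % 2 = 1) (hc0 : 0 < c) (hcn : c < n)

include hn2 h2 hcm hc0 hcn

lemma sub_c_parity (u : ZMod n) (hu : u.val % 2 = 0) :
    (u - (c : ZMod n)).val % 2 = 1 := by
  have hn0 : n ≠ 0 := by omega
  have hcast : ((n - c : ℕ) : ZMod n) = -(c : ZMod n) := by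
    rw [Nat.cast_sub hcn.le, ZMod.natCast_self, zero_sub]
  have h : u - (c : ZMod n) = u + ((n - c : ℕ) : ZMod n) := by rw [hcast]; ring
  haveI : NeZero n := ⟨hn0⟩
  rw [h, val_add_mod_two hn0 h2, ZMod.val_natCast,
    Nat.mod_eq_of_lt (show n - c < n by omega)]
  omega

lemma add_c_parity (u : ZMod n) (hu : u.val % 2 = 1) :
    (u + (c : ZMod n)).val % 2 = 0 := by
  have hn0 : n ≠ 0 := by omega
  haveI : NeZero n := ⟨hn0⟩
  rw [val_add_mod_two hn0 h2, ZMod.val_natCast]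
  have := Nat.mod_lt c (show 0 < n by omega)
  have hcc : c % n = c := Nat.mod_eq_of_lt hcn
  omega

lemma add_one_parity (u : ZMod n) (b : ℕ) (hu : u.val % 2 = b % 2) :
    (u + 1).val % 2 = (b + 1) % 2 := by
  have hn0 : n ≠ 0 := by omega
  haveI : NeZero n := ⟨hn0⟩
  have h1 : (1 : ZMod n) = ((1 : ℕ) : ZMod n) := by norm_cast
  rw [h1, val_add_mod_two hn0 h2, ZMod.val_natCast,
    Nat.mod_eq_of_lt (show 1 < n by omega)]
  omega

lemma walk_down (d : ℕ) :
    ∀ (u : ZMod n) (k : ℕ), (u.val % 2 = 0 → 2 * k ≤ d + 1) →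
      (u.val % 2 = 1 → 2 * k ≤ d) →
      hasWalk (crmStep n c) d u (u + d - k * ((c : ZMod n) + 1)) := by
  induction d with
  | zero =>
    intro u k he ho
    have hk : k = 0 := by
      rcases Nat.mod_two_eq_zero_or_one u.val with h | h <;> omega
    subst hk
    simpa [hasWalk] using rfl
  | succ d ih =>
    intro u k he ho
    rcases Nat.eq_zero_or_pos k with hk0 | hk1
    · subst hk0
      have h := walk_ones (c := c) (d + 1) u
      have heq : u + ((d + 1 : ℕ) : ZMod n)
          = u + ((d + 1 : ℕ) : ZMod n) - ((0 : ℕ) : ZMod n) * ((c : ZMod n) + 1) := by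
        push_cast; ring
      rw [heq] at h
      exact h
    · rcases Nat.mod_two_eq_zero_or_one u.val with hp | hp
      · -- even: step down
        have hodd := sub_c_parity hn2 h2 hcm hc0 hcn u hp
        refine ⟨u - c, step_down hodd, ?_⟩
        have hkd : 2 * (k - 1) ≤ d := by have := he hp; omega
        have := ih (u - c) (k - 1) (fun h0 => by omega) (fun _ => hkd)
        have heq : (u - c) + (d : ℕ) - (k - 1 : ℕ) * ((c : ZMod n) + 1)
            = u + ((d + 1 : ℕ) : ZMod n) - k * ((c : ZMod n) + 1) := by
          have : ((k - 1 : ℕ) : ZMod n) = (k : ZMod n) - 1 := by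
            rw [Nat.cast_sub hk1]; norm_cast
          rw [this]; push_cast; ring
        rw [heq] at this
        exact this
      · -- odd: step +1
        have hkd := ho hp
        refine ⟨u + 1, step_arc u, ?_⟩
        have hpe : (u + 1).val % 2 = 0 := by
          have := add_one_parity hn2 h2 hcm hc0 hcn u 1 hp
          simpa using this
        have := ih (u + 1) k (fun _ => by omega) (fun h1 => by omega)
        have heq : (u + 1) + (d : ℕ) - k * ((c : ZMod n) + 1)
            = u + ((d + 1 : ℕ) : ZMod n) - k * ((c : ZMod n) + 1) := by
          push_cast; ring
        rw [heq] at this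
        exact this

lemma walk_up (d : ℕ) :
    ∀ (u : ZMod n) (k : ℕ), (u.val % 2 = 0 → 2 * k ≤ d) →
      (u.val % 2 = 1 → 2 * k ≤ d + 1) →
      hasWalk (crmStep n c) d u (u + d + k * ((c : ZMod n) - 1)) := by
  induction d with
  | zero =>
    intro u k he ho
    have hk : k = 0 := by
      rcases Nat.mod_two_eq_zero_or_one u.val with h | h <;> omega
    subst hk
    simpa [hasWalk] using rfl
  | succ d ih =>
    intro u k he ho
    rcases Nat.eq_zero_or_pos k with hk0 | hk1
    · subst hk0
      have h := walk_ones (c := c) (d + 1) u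
      have heq : u + ((d + 1 : ℕ) : ZMod n)
          = u + ((d + 1 : ℕ) : ZMod n) + ((0 : ℕ) : ZMod n) * ((c : ZMod n) - 1) := by
        push_cast; ring
      rw [heq] at h
      exact h
    · rcases Nat.mod_two_eq_zero_or_one u.val with hp | hp
      · -- even: step +1
        have hkd := he hp
        refine ⟨u + 1, step_arc u, ?_⟩
        have hpo : (u + 1).val % 2 = 1 := by
          have := add_one_parity hn2 h2 hcm hc0 hcn u 0 hp
          simpa using this
        have := ih (u + 1) k (fun h0 => by omega) (fun _ => by omega)
        have heq : (u + 1) + (d : ℕ) + k * ((c : ZMod n) - 1)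
            = u + ((d + 1 : ℕ) : ZMod n) + k * ((c : ZMod n) - 1) := by
          push_cast; ring
        rw [heq] at this
        exact this
      · -- odd: step +c
        have heven := add_c_parity hn2 h2 hcm hc0 hcn u hp
        refine ⟨u + c, step_up hp, ?_⟩
        have hkd : 2 * (k - 1) ≤ d := by have := ho hp; omega
        have := ih (u + c) (k - 1) (fun _ => hkd) (fun h1 => by omega)
        have heq : (u + c) + (d : ℕ) + (k - 1 : ℕ) * ((c : ZMod n) - 1)
            = u + ((d + 1 : ℕ) : ZMod n) + k * ((c : ZMod n) - 1) := by
          have : ((k - 1 : ℕ) : ZMod n) = (k : ZMod n) - 1 := by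
            rw [Nat.cast_sub hk1]; norm_cast
          rw [this]; push_cast; ring
        rw [heq] at this
        exact this

lemma reach_up (d k : ℕ) (hk : 2 * k ≤ d) :
    hasWalk (crmStep n c) d 0 ((d : ZMod n) + k * ((c : ZMod n) - 1)) := by
  haveI : NeZero n := ⟨by omega⟩
  have h0 : ((0 : ZMod n)).val % 2 = 0 := by rw [ZMod.val_zero]
  have := walk_up hn2 h2 hcm hc0 hcn d 0 k (fun _ => hk) (fun h1 => by omega)
  simpa using this

lemma reach_down (d k : ℕ) (hk : 2 * k ≤ d + 1) :
    hasWalk (crmStep n c) d 0 ((d : ZMod n) - k * ((c : ZMod n) + 1)) := by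
  haveI : NeZero n := ⟨by omega⟩
  have h0 : ((0 : ZMod n)).val % 2 = 0 := by rw [ZMod.val_zero]
  have := walk_down hn2 h2 hcm hc0 hcn d 0 k (fun _ => hk) (fun h1 => by omega)
  simpa using this

/-- Parity of the canonical "up" vertices. -/
lemma up_parity (d k : ℕ) :
    ((d : ZMod n) + k * ((c : ZMod n) - 1)).val % 2 = d % 2 := by
  have hn0 : n ≠ 0 := by omega
  have hc1 : 1 ≤ c := hc0
  have hcast : (d : ZMod n) + k * ((c : ZMod n) - 1)
      = ((d + k * (c - 1) : ℕ) : ZMod n) := by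
    push_cast [Nat.cast_sub hc1]; ring
  obtain ⟨m, hm⟩ : 2 ∣ (c - 1) := by omega
  rw [hcast, val_natCast_mod_two hn0 h2, hm,
    show k * (2 * m) = k * m * 2 by ring, Nat.add_mul_mod_self_right]

lemma down_parity (d k : ℕ) :
    ((d : ZMod n) - k * ((c : ZMod n) + 1)).val % 2 = d % 2 := by
  have hn0 : n ≠ 0 := by omega
  have hc1 : c + 1 ≤ n := hcn
  have hkey : ((n - (c + 1) : ℕ) : ZMod n) = -((c : ZMod n) + 1) := by
    rw [Nat.cast_sub hc1, ZMod.natCast_self, zero_sub]; push_cast; ring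
  have hcast : (d : ZMod n) - k * ((c : ZMod n) + 1)
      = ((d + k * (n - (c + 1)) : ℕ) : ZMod n) := by
    push_cast [hkey]; ring
  obtain ⟨m, hm⟩ : 2 ∣ (n - (c + 1)) := by omega
  rw [hcast, val_natCast_mod_two hn0 h2, hm,
    show k * (2 * m) = k * m * 2 by ring, Nat.add_mul_mod_self_right]

/-- Main structural lemma: a vertex at distance exactly `d` from `0` lies in one
of the two canonical families. -/
lemma main_lemma (d : ℕ) :
    ∀ v : ZMod n, hasWalk (crmStep n c) d 0 v →
      (∀ e < d, ¬ hasWalk (crmStep n c) e 0 v) →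
      ∃ k, (2 * k ≤ d ∧ v = (d : ZMod n) + k * ((c : ZMod n) - 1)) ∨
        (2 * k ≤ d + 1 ∧ v = (d : ZMod n) - k * ((c : ZMod n) + 1)) := by
  induction d with
  | zero =>
    intro v hw _
    refine ⟨0, Or.inl ⟨by omega, ?_⟩⟩
    have : (0 : ZMod n) = v := hw
    simp [← this]
  | succ d ih =>
    intro v hw hmin
    obtain ⟨w, hww, hs⟩ := hasWalk_unsnoc d hw
    have hwmin : ∀ e < d, ¬ hasWalk (crmStep n c) e 0 w := by
      intro e he hwe
      exact hmin (e + 1) (by omega) (hasWalk_snoc e hwe hs)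
    obtain ⟨k, hk⟩ := ih w hww hwmin
    have hn0 : n ≠ 0 := by omega
    rcases hs with (⟨hwo, hv⟩ | ⟨hvo, hv⟩) | hv
    · -- chord up: w odd, v = w + c
      have hwpar : w.val % 2 = d % 2 := by
        rcases hk with ⟨_, hweq⟩ | ⟨_, hweq⟩
        · rw [hweq]; exact up_parity hn2 h2 hcm hc0 hcn d k
        · rw [hweq]; exact down_parity hn2 h2 hcm hc0 hcn d k
      have hdodd : d % 2 = 1 := by omega
      rcases hk with ⟨hkle, hweq⟩ | ⟨hkle, hweq⟩
      · refine ⟨k + 1, Or.inl ⟨by omega, ?_⟩⟩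
        rw [hv, hweq]; push_cast; ring
      · rcases Nat.eq_zero_or_pos k with hk0 | hk1
        · subst hk0
          refine ⟨1, Or.inl ⟨by omega, ?_⟩⟩
          rw [hv, hweq]; push_cast; ring
        · exfalso
          have hd1 : 1 ≤ d := by omega
          have hwalk := reach_down hn2 h2 hcm hc0 hcn (d - 1) (k - 1) (by omega)
          have heq : ((d - 1 : ℕ) : ZMod n) - ((k - 1 : ℕ)) * ((c : ZMod n) + 1) = v := by
            rw [hv, hweq, Nat.cast_sub hd1, Nat.cast_sub hk1]
            push_cast; ring
          rw [heq] at hwalk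
          exact hmin (d - 1) (by omega) hwalk
    · -- chord down: v odd, w = v + c, so v = w - c
      have hv' : v = w - c := by rw [hv]; ring
      have hwpar : w.val % 2 = d % 2 := by
        rcases hk with ⟨_, hweq⟩ | ⟨_, hweq⟩
        · rw [hweq]; exact up_parity hn2 h2 hcm hc0 hcn d k
        · rw [hweq]; exact down_parity hn2 h2 hcm hc0 hcn d k
      have hwpar2 : w.val % 2 = (v.val + c) % 2 := by
        haveI : NeZero n := ⟨hn0⟩
        rw [hv, val_add_mod_two hn0 h2, ZMod.val_natCast, Nat.mod_eq_of_lt hcn]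
      have hdeven : d % 2 = 0 := by omega
      rcases hk with ⟨hkle, hweq⟩ | ⟨hkle, hweq⟩
      · rcases Nat.eq_zero_or_pos k with hk0 | hk1
        · subst hk0
          refine ⟨1, Or.inr ⟨by omega, ?_⟩⟩
          rw [hv', hweq]; push_cast; ring
        · exfalso
          have hd1 : 1 ≤ d := by omega
          have hwalk := reach_up hn2 h2 hcm hc0 hcn (d - 1) (k - 1) (by omega)
          have heq : ((d - 1 : ℕ) : ZMod n) + ((k - 1 : ℕ)) * ((c : ZMod n) - 1) = v := by
            rw [hv', hweq, Nat.cast_sub hd1, Nat.cast_sub hk1]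
            push_cast; ring
          rw [heq] at hwalk
          exact hmin (d - 1) (by omega) hwalk
      · refine ⟨k + 1, Or.inr ⟨by omega, ?_⟩⟩
        rw [hv', hweq]; push_cast; ring
    · -- arc: v = w + 1
      rcases hk with ⟨hkle, hweq⟩ | ⟨hkle, hweq⟩
      · refine ⟨k, Or.inl ⟨by omega, ?_⟩⟩
        rw [hv, hweq]; push_cast; ring
      · refine ⟨k, Or.inr ⟨by omega, ?_⟩⟩
        rw [hv, hweq]; push_cast; ring

end walks

end CRMaux

/-- In $CRM(n,c)$, for every $d ≥ 0$ there are at most $d+1$ vertices at distance exactly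
$d$ from the vertex $0$. -/
theorem CRM_sphere_card_le (n c d : ℕ) (hn : 2 ≤ n) (hne : Even n)
    (hc : Odd c) (hc0 : 0 < c) (hcn : c < n) :
    {v : ZMod n |
        hasWalk (crmStep n c) d 0 v ∧
        ∀ e < d, ¬ hasWalk (crmStep n c) e 0 v}.ncard ≤ d + 1 := by
  have h2 : 2 ∣ n := hne.two_dvd
  have hcm : c % 2 = 1 := Nat.odd_iff.mp hc
  set g : ℕ → ZMod n := fun j =>
    if j ≤ d / 2 then (d : ZMod n) + j * ((c : ZMod n) - 1)
    else (d : ZMod n) - ((j - d / 2 : ℕ)) * ((c : ZMod n) + 1) with hg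
  have hsub : {v : ZMod n |
      hasWalk (crmStep n c) d 0 v ∧
      ∀ e < d, ¬ hasWalk (crmStep n c) e 0 v} ⊆ g '' ↑(Finset.range (d + 1)) := by
    rintro v ⟨hw, hmin⟩
    obtain ⟨k, hk⟩ := CRMaux.main_lemma hn h2 hcm hc0 hcn d v hw hmin
    rcases hk with ⟨hkle, hkeq⟩ | ⟨hkle, hkeq⟩
    · refine ⟨k, by simp; omega, ?_⟩
      rw [hg]
      simp only
      rw [if_pos (by omega)]
      exact hkeq.symm
    · rcases Nat.eq_zero_or_pos k with hk0 | hk1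
      · subst hk0
        refine ⟨0, by simp, ?_⟩
        rw [hg]
        simp only
        rw [if_pos (by omega)]
        rw [hkeq]
        push_cast
        ring
      · refine ⟨d / 2 + k, by simp; omega, ?_⟩
        rw [hg]
        simp only
        rw [if_neg (by omega)]
        have : d / 2 + k - d / 2 = k := by omega
        rw [this]
        exact hkeq.symm
  calc {v : ZMod n |
      hasWalk (crmStep n c) d 0 v ∧
      ∀ e < d, ¬ hasWalk (crmStep n c) e 0 v}.ncard
      ≤ (g '' ↑(Finset.range (d + 1))).ncard :=
        Set.ncard_le_ncard hsub ((Finset.range (d + 1)).finite_toSet.image g)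
    _ ≤ (↑(Finset.range (d + 1)) : Set ℕ).ncard :=
        Set.ncard_image_le (Finset.range (d + 1)).finite_toSet
    _ = d + 1 := by rw [Set.ncard_coe_finset, Finset.card_range]
end

section
/- Every finite bipartite totally regular (1,1)-mixed graph with diameter at most 4 has at most M_B(4) − 2⌈2/3⌉ = 14 − 2 = 12 vertices. -/
/-- The bipartite Moore bound for `(1,1,k)`-mixed graphs:
`M_B(1) = 2`, `M_B(2) = 4` and `M_B(k) = M_B(k-1) + M_B(k-2) + 2` for `k ≥ 3`. -/
def MB : ℕ → ℕ
  | 0 => 0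
  | 1 => 2
  | 2 => 4
  | k + 3 => MB (k + 2) + MB (k + 1) + 2

/-- A six-element finset literal has cardinality at most `6`. -/
lemma card_six_le {V : Type} [DecidableEq V] (y1 y2 y3 y4 y5 y6 : V) :
    ({y1, y2, y3, y4, y5, y6} : Finset V).card ≤ 6 := by
  have h1 := Finset.card_insert_le y1 ({y2, y3, y4, y5, y6} : Finset V)
  have h2 := Finset.card_insert_le y2 ({y3, y4, y5, y6} : Finset V)
  have h3 := Finset.card_insert_le y3 ({y4, y5, y6} : Finset V)
  have h4 := Finset.card_insert_le y4 ({y5, y6} : Finset V)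
  have h5 := Finset.card_insert_le y5 ({y6} : Finset V)
  have h6 : ({y6} : Finset V).card = 1 := Finset.card_singleton _
  omega

set_option maxHeartbeats 2000000 in
/-- Every finite bipartite totally regular $(1,1)$-mixed graph with diameter at most $4$
has at most $M_B(4) - 2⌈2/3⌉ = 14 - 2 = 12$ vertices. -/
theorem bipartite_totally_regular_diameter_four_bound
    (V : Type) [Finite V] (edge arc : V → V → Prop)
    (hsymm : Symmetric edge)
    (hdisj : ∀ u v : V, edge u v → ¬ arc u v)
    (hnodigon : ∀ u v : V, arc u v → ¬ arc v u)
    (hedge1 : ∀ v : V, ∃! w, edge v w)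
    (hout1 : ∀ v : V, ∃! w, arc v w)
    (hin1 : ∀ v : V, ∃! u, arc u v)
    (hbip : ∃ P : V → Prop,
      (∀ u v, edge u v → (P u ↔ ¬ P v)) ∧ (∀ u v, arc u v → (P u ↔ ¬ P v)))
    (hdiam : ∀ u v : V,
      ∃ d ≤ 4, hasWalk (fun a b => edge a b ∨ arc a b) d u v) :
    Nat.card V ≤ 12 := by
  classical
  obtain hV | hV := isEmpty_or_nonempty V
  · rw [Nat.card_of_isEmpty]; omega
  obtain ⟨P, hPedge, hParc⟩ := hbip
  -- extract the edge-partner function `e` and the out-arc function `a`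
  choose e he heu using hedge1
  choose a ha hau using hout1
  choose b hb hbu using hin1
  set step : V → V → Prop := fun x y => edge x y ∨ arc x y with hstepdef
  -- basic facts
  have einv : ∀ v, e (e v) = v := by
    intro v
    exact (heu (e v) v (hsymm (he v))).symm
  have einj : ∀ x y, e x = e y → x = y := by
    intro x y h
    have := congrArg e h
    rwa [einv, einv] at this
  have ainj : ∀ x y, a x = a y → x = y := by
    intro x y h
    have hx : x = b (a x) := hbu (a x) x (ha x)
    have hy : y = b (a y) := hbu (a y) y (ha y)
    rw [hx, hy, h]
  have Pe : ∀ v, P v ↔ ¬ P (e v) := fun v => hPedge v (e v) (he v)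
  have Pa : ∀ v, P v ↔ ¬ P (a v) := fun v => hParc v (a v) (ha v)
  -- no digons through `a`
  have nodig : ∀ v, a (a v) ≠ v := by
    intro v h
    have h1 : arc v (a v) := ha v
    have h2 : arc (a v) v := by
      have := ha (a v); rwa [h] at this
    exact hnodigon v (a v) h1 h2
  -- a single step lands on `e` or `a`
  have hstep : ∀ u x : V, step u x → x = e u ∨ x = a u := by
    rintro u x (h | h)
    · exact Or.inl (heu u x h)
    · exact Or.inr (hau u x h)
  have hflip : ∀ u x : V, step u x → (P u ↔ ¬ P x) := by
    rintro u x (h | h)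
    · exact hPedge u x h
    · exact hParc u x h
  -- unfolding lemmas for hasWalk
  have hwS : ∀ (d : ℕ) (u v : V),
      hasWalk step (d + 1) u v ↔ ∃ w, step u w ∧ hasWalk step d w v := fun _ _ _ => Iff.rfl
  have hw0 : ∀ u v : V, hasWalk step 0 u v ↔ u = v := fun _ _ => Iff.rfl
  -- every vertex in the opposite part is one of the seven odd words
  have walkmem : ∀ w v : V, (P w ↔ ¬ P v) →
      v = e w ∨ v = a w ∨ v = e (a (e w)) ∨ v = a (a (e w)) ∨
      v = a (e (a w)) ∨ v = e (a (a w)) ∨ v = a (a (a w)) := by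
    intro w v hpar
    obtain ⟨d, hd, hwalk⟩ := hdiam w v
    interval_cases d
    · have : w = v := (hw0 w v).mp hwalk
      subst this
      tauto
    · obtain ⟨x, hx, hxv⟩ := (hwS 0 w v).mp hwalk
      have : x = v := (hw0 x v).mp hxv
      subst this
      rcases hstep w x hx with h | h <;> tauto
    · obtain ⟨x, hx, hwalk⟩ := (hwS 1 w v).mp hwalk
      obtain ⟨y, hy, hyv⟩ := (hwS 0 x v).mp hwalk
      have : y = v := (hw0 y v).mp hyv
      subst this
      have p1 := hflip w x hx
      have p2 := hflip x y hy
      tauto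
    · obtain ⟨x, hx, hwalk⟩ := (hwS 2 w v).mp hwalk
      obtain ⟨y, hy, hwalk⟩ := (hwS 1 x v).mp hwalk
      obtain ⟨z, hz, hzv⟩ := (hwS 0 y v).mp hwalk
      have : z = v := (hw0 z v).mp hzv
      subst this
      have h1 := hstep w x hx
      have h2 := hstep x y hy
      have h3 := hstep y z hz
      rcases h1 with rfl | rfl <;> rcases h2 with rfl | rfl <;> rcases h3 with rfl | rfl <;>
        simp only [einv] <;> tauto
    · obtain ⟨x, hx, hwalk⟩ := (hwS 3 w v).mp hwalk
      obtain ⟨y, hy, hwalk⟩ := (hwS 2 x v).mp hwalk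
      obtain ⟨z, hz, hwalk⟩ := (hwS 1 y v).mp hwalk
      obtain ⟨t, ht, htv⟩ := (hwS 0 z v).mp hwalk
      have : t = v := (hw0 t v).mp htv
      subst this
      have p1 := hflip w x hx
      have p2 := hflip x y hy
      have p3 := hflip y z hz
      have p4 := hflip z t ht
      tauto
  -- the key coincidence: the seven odd words from `w` are never all distinct
  have coincide : ∀ w : V,
      e w = a w ∨ e w = a (e (a w)) ∨ e w = a (a (a w)) ∨
      a (a (e w)) = a (e (a w)) ∨ e (a (e w)) = a (e (a w)) ∨
      e (a (e w)) = a (a (a w)) := by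
    intro w
    have hq : P (a w) ↔ ¬ P (a (e w)) := by
      have h1 := Pa w
      have h2 := Pe w
      have h3 := Pa (e w)
      tauto
    rcases walkmem (a w) (a (e w)) hq with h | h | h | h | h | h | h
    · -- a (e w) = e (a w)
      exact Or.inr (Or.inr (Or.inr (Or.inl (congrArg a h))))
    · -- a (e w) = a (a w)
      exact Or.inl (ainj _ _ h)
    · -- a (e w) = e (a (e (a w)))
      have := congrArg e h
      rw [einv] at this
      exact Or.inr (Or.inr (Or.inr (Or.inr (Or.inl this))))
    · -- a (e w) = a (a (e (a w)))
      exact Or.inr (Or.inl (ainj _ _ h))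
    · -- a (e w) = a (e (a (a w)))
      exfalso
      have h1 : e w = e (a (a w)) := ainj _ _ h
      have h2 : w = a (a w) := einj _ _ h1
      exact nodig w h2.symm
    · -- a (e w) = e (a (a (a w)))
      have := congrArg e h
      rw [einv] at this
      exact Or.inr (Or.inr (Or.inr (Or.inr (Or.inr this))))
    · -- a (e w) = a (a (a (a w)))
      exact Or.inr (Or.inr (Or.inl (ainj _ _ h)))
  have _inst : Fintype V := Fintype.ofFinite V
  set S : V → Finset V := fun w =>
    {e w, a w, e (a (e w)), a (a (e w)), a (e (a w)), e (a (a w)), a (a (a w))} with hS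
  have memS : ∀ w v : V, (P w ↔ ¬ P v) → v ∈ S w := by
    intro w v hpar
    simp only [hS, Finset.mem_insert, Finset.mem_singleton]
    exact walkmem w v hpar
  have cardS : ∀ w : V, (S w).card ≤ 6 := by
    intro w
    rcases coincide w with h | h | h | h | h | h
    · refine le_trans (Finset.card_le_card (fun z hz => ?_))
        (card_six_le (a w) (e (a (e w))) (a (a (e w))) (a (e (a w))) (e (a (a w))) (a (a (a w))))
      simp only [hS, Finset.mem_insert, Finset.mem_singleton] at hz ⊢
      rcases hz with rfl | rfl | rfl | rfl | rfl | rfl | rfl <;> simp [h]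
    · refine le_trans (Finset.card_le_card (fun z hz => ?_))
        (card_six_le (a w) (e (a (e w))) (a (a (e w))) (a (e (a w))) (e (a (a w))) (a (a (a w))))
      simp only [hS, Finset.mem_insert, Finset.mem_singleton] at hz ⊢
      rcases hz with rfl | rfl | rfl | rfl | rfl | rfl | rfl <;> simp [h]
    · refine le_trans (Finset.card_le_card (fun z hz => ?_))
        (card_six_le (a w) (e (a (e w))) (a (a (e w))) (a (e (a w))) (e (a (a w))) (a (a (a w))))
      simp only [hS, Finset.mem_insert, Finset.mem_singleton] at hz ⊢
      rcases hz with rfl | rfl | rfl | rfl | rfl | rfl | rfl <;> simp [h]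
    · refine le_trans (Finset.card_le_card (fun z hz => ?_))
        (card_six_le (e w) (a w) (e (a (e w))) (a (e (a w))) (e (a (a w))) (a (a (a w))))
      simp only [hS, Finset.mem_insert, Finset.mem_singleton] at hz ⊢
      rcases hz with rfl | rfl | rfl | rfl | rfl | rfl | rfl <;> simp [h]
    · refine le_trans (Finset.card_le_card (fun z hz => ?_))
        (card_six_le (e w) (a w) (a (a (e w))) (a (e (a w))) (e (a (a w))) (a (a (a w))))
      simp only [hS, Finset.mem_insert, Finset.mem_singleton] at hz ⊢
      rcases hz with rfl | rfl | rfl | rfl | rfl | rfl | rfl <;> simp [h]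
    · refine le_trans (Finset.card_le_card (fun z hz => ?_))
        (card_six_le (e w) (a w) (a (a (e w))) (a (e (a w))) (e (a (a w))) (a (a (a w))))
      simp only [hS, Finset.mem_insert, Finset.mem_singleton] at hz ⊢
      rcases hz with rfl | rfl | rfl | rfl | rfl | rfl | rfl <;> simp [h]
  -- pick one vertex in each part
  obtain ⟨v0⟩ := hV
  obtain ⟨wp, hwp, wq, hwq⟩ : ∃ wp, P wp ∧ ∃ wq, ¬ P wq := by
    by_cases h : P v0
    · exact ⟨v0, h, e v0, by have := Pe v0; tauto⟩
    · exact ⟨e v0, by have := Pe v0; tauto, v0, h⟩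
  have huniv : (Finset.univ : Finset V) ⊆ S wp ∪ S wq := by
    intro v _
    by_cases hv : P v
    · exact Finset.mem_union_right _ (memS wq v (by tauto))
    · exact Finset.mem_union_left _ (memS wp v (by tauto))
  have hcard : (Finset.univ : Finset V).card ≤ 12 := by
    calc (Finset.univ : Finset V).card ≤ (S wp ∪ S wq).card := Finset.card_le_card huniv
      _ ≤ (S wp).card + (S wq).card := Finset.card_union_le _ _
      _ ≤ 12 := by have := cardS wp; have := cardS wq; omega
  rw [Nat.card_eq_fintype_card]
  simpa using hcard
end
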